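/- arXiv:2308.10418 — 5 statements merged into one kernel-verified Lean document; each statement's English description precedes it below -/
import Mathlib

section
/- Let n and k be non-negative integers with k ≤ n, and let p be a prime. The additive group ℤ_p^n (i.e., the group (ZMod p)^n) has exactly β_p(n,k) distinct subgroups of order p^k, where β_p(n,k) := ∏_{0 ≤ i < k} (p^{n−i} − 1)/(p^{k−i} − 1). -/
open Module

section count

variable (K V : Type*) [Field K] [AddCommGroup V] [Module K V] [Fintype K] [Finite V]

instance : Finite (Submodule K V) :=
  Finite.of_injective (fun W => (W : Set V)) SetLike.coe_injective

variable {K V}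

/-- map a linearly independent tuple to its span, as an element of the k-dim subspaces. -/
noncomputable def spanMap (k : ℕ) (s : {s : Fin k → V // LinearIndependent K s}) :
    {W : Submodule K V // finrank K W = k} :=
  ⟨Submodule.span K (Set.range s.1), by
    have := Fintype.ofFinite V
    rw [finrank_span_eq_card s.2, Fintype.card_fin]⟩

noncomputable def fiberEquiv (k : ℕ) (W : {W : Submodule K V // finrank K W = k}) :
    {s : {s : Fin k → V // LinearIndependent K s} // spanMap k s = W} ≃
      {t : Fin k → W.1 // LinearIndependent K t} where
  toFun s := ⟨fun i => ⟨s.1.1 i, by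
      have h : Submodule.span K (Set.range s.1.1) = W.1 := congrArg Subtype.val s.2
      exact h ▸ Submodule.subset_span (Set.mem_range_self i)⟩, by
    apply LinearIndependent.of_comp W.1.subtype
    exact s.1.2⟩
  invFun t := ⟨⟨fun i => (t.1 i : V),
      t.2.map' W.1.subtype (Submodule.ker_subtype _)⟩, by
    apply Subtype.ext
    show Submodule.span K (Set.range fun i => ((t.1 i : V))) = W.1
    have h1 : Submodule.span K (Set.range t.1) = ⊤ := by
      have := Fintype.ofFinite (↥W.1)
      apply Submodule.eq_top_of_finrank_eq
      rw [finrank_span_eq_card t.2, Fintype.card_fin, W.2]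
    have h2 : Submodule.span K (Set.range fun i => ((t.1 i : V))) =
        Submodule.map W.1.subtype (Submodule.span K (Set.range t.1)) := by
      rw [Submodule.map_span]
      congr 1
      ext v; simp [Set.range_comp]
    rw [h2, h1, Submodule.map_top, Submodule.range_subtype]⟩
  left_inv s := by ext i; rfl
  right_inv t := by ext i; rfl

theorem count_key (k : ℕ) (hk : k ≤ finrank K V) :
    (∏ i ∈ Finset.range k, (Fintype.card K ^ finrank K V - Fintype.card K ^ i)) =
      Nat.card {W : Submodule K V // finrank K W = k} *
        ∏ i ∈ Finset.range k, (Fintype.card K ^ k - Fintype.card K ^ i) := by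
  classical
  have h1 := card_linearIndependent (K := K) (V := V) hk
  have := Fintype.ofFinite V
  have := Fintype.ofFinite {W : Submodule K V // finrank K W = k}
  have := Fintype.ofFinite {s : Fin k → V // LinearIndependent K s}
  rw [Nat.card_eq_fintype_card] at h1
  have h2 : Fintype.card {s : Fin k → V // LinearIndependent K s} =
      ∑ W : {W : Submodule K V // finrank K W = k},
        Fintype.card {s : {s : Fin k → V // LinearIndependent K s} // spanMap k s = W} := by
    rw [← Fintype.card_sigma]
    exact (Fintype.card_congr (Equiv.sigmaFiberEquiv (spanMap k))).symm
  have h3 : ∀ W : {W : Submodule K V // finrank K W = k},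
      Fintype.card {s : {s : Fin k → V // LinearIndependent K s} // spanMap k s = W} =
        ∏ i ∈ Finset.range k, (Fintype.card K ^ k - Fintype.card K ^ i) := by
    intro W
    rw [← Nat.card_eq_fintype_card, Nat.card_congr (fiberEquiv k W),
      card_linearIndependent (K := K) (V := W.1) (le_of_eq W.2.symm), W.2]
    rw [Finset.prod_range fun i => Fintype.card K ^ k - Fintype.card K ^ i]
  rw [h2] at h1
  simp only [h3, Finset.sum_const, Finset.card_univ, smul_eq_mul] at h1
  rw [Nat.card_eq_fintype_card,
    Finset.prod_range fun i => Fintype.card K ^ finrank K V - Fintype.card K ^ i]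
  exact h1.symm
end count



/-- **Number of subgroups of a given order in `ℤ_p^n` (Koiran–Nesme–Portier).**
For a prime `p` and `k ≤ n`, the additive group `(ZMod p)^n` has exactly
`β_p(n,k) = ∏_{0 ≤ i < k} (p^{n−i} − 1)/(p^{k−i} − 1)` distinct subgroups of order `p^k`. -/
theorem card_addSubgroups_of_order (p n k : ℕ) (hp : p.Prime) (hk : k ≤ n) :
    (Nat.card {K : AddSubgroup (Fin n → ZMod p) // Nat.card K = p ^ k} : ℚ) =
      ∏ i ∈ Finset.range k, (((p : ℚ) ^ (n - i) - 1) / ((p : ℚ) ^ (k - i) - 1)) := by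
  classical
  haveI := Fact.mk hp
  set V := Fin n → ZMod p
  have hfr : finrank (ZMod p) V = n := by
    rw [Module.finrank_fintype_fun_eq_card, Fintype.card_fin]
  -- step 1 : subgroups of order p^k correspond to submodules of finrank k
  have e : {K : AddSubgroup V // Nat.card K = p ^ k} ≃
      {W : Submodule (ZMod p) V // finrank (ZMod p) W = k} := by
    refine (AddSubgroup.toZModSubmodule p).toEquiv.subtypeEquiv fun K => ?_
    have hc : Nat.card ↥K = Nat.card ↥(AddSubgroup.toZModSubmodule p K) := rfl
    have hcard : Nat.card ↥(AddSubgroup.toZModSubmodule p K) =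
        p ^ finrank (ZMod p) ↥(AddSubgroup.toZModSubmodule p K) := by
      haveI : Fintype ↥(AddSubgroup.toZModSubmodule p K) := Fintype.ofFinite _
      rw [Nat.card_eq_fintype_card, card_eq_pow_finrank (K := ZMod p), ZMod.card]
    rw [hc, hcard]
    exact ⟨fun h => Nat.pow_right_injective hp.two_le h,
      fun h => congrArg (p ^ ·) h⟩
  rw [Nat.card_congr e]
  -- step 2 : the counting identity over ℕ
  have key := count_key (K := ZMod p) (V := V) k (le_of_le_of_eq hk hfr.symm)
  rw [ZMod.card, hfr] at key
  set N := Nat.card {W : Submodule (ZMod p) V // finrank (ZMod p) W = k} with hN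
  -- step 3 : cast to ℚ
  have hp0 : (p : ℚ) ≠ 0 := Nat.cast_ne_zero.2 hp.pos.ne'
  have hp1 : (1 : ℚ) < p := by exact_mod_cast hp.one_lt
  have hcast : ∀ m : ℕ, ∀ i ∈ Finset.range k, i ≤ m →
      ((p ^ m - p ^ i : ℕ) : ℚ) = (p : ℚ) ^ m - (p : ℚ) ^ i := by
    intro m i _ him
    rw [Nat.cast_sub (Nat.pow_le_pow_right hp.pos him)]
    push_cast; ring
  have keyQ : (∏ i ∈ Finset.range k, ((p : ℚ) ^ n - (p : ℚ) ^ i)) =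
      (N : ℚ) * ∏ i ∈ Finset.range k, ((p : ℚ) ^ k - (p : ℚ) ^ i) := by
    have := congrArg (fun m : ℕ => (m : ℚ)) key
    push_cast at this
    rw [Finset.prod_congr rfl (fun i hi => hcast n i hi ((Finset.mem_range.1 hi).le.trans hk)),
      Finset.prod_congr rfl (fun i hi => hcast k i hi (Finset.mem_range.1 hi).le)] at this
    exact this
  have hBne : ∀ i ∈ Finset.range k, (p : ℚ) ^ k - (p : ℚ) ^ i ≠ 0 := by
    intro i hi
    have : (p : ℚ) ^ i < (p : ℚ) ^ k := pow_lt_pow_right₀ hp1 (Finset.mem_range.1 hi)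
    linarith
  have hB : (∏ i ∈ Finset.range k, ((p : ℚ) ^ k - (p : ℚ) ^ i)) ≠ 0 :=
    Finset.prod_ne_zero_iff.2 hBne
  -- step 4 : rearrange factors
  have hfac : ∀ i ∈ Finset.range k,
      ((p : ℚ) ^ (n - i) - 1) / ((p : ℚ) ^ (k - i) - 1) =
        ((p : ℚ) ^ n - (p : ℚ) ^ i) / ((p : ℚ) ^ k - (p : ℚ) ^ i) := by
    intro i hi
    have hik := Finset.mem_range.1 hi
    have e1 : (p : ℚ) ^ n = p ^ i * p ^ (n - i) := by
      rw [← pow_add]; congr 1; omega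
    have e2 : (p : ℚ) ^ k = p ^ i * p ^ (k - i) := by
      rw [← pow_add]; congr 1; omega
    rw [e1, e2]
    rw [show (p : ℚ) ^ i * p ^ (n - i) - p ^ i = p ^ i * (p ^ (n - i) - 1) by ring,
      show (p : ℚ) ^ i * p ^ (k - i) - p ^ i = p ^ i * (p ^ (k - i) - 1) by ring,
      mul_div_mul_left _ _ (pow_ne_zero i hp0)]
  rw [Finset.prod_congr rfl hfac, Finset.prod_div_distrib, eq_div_iff hB]
  exact keyQ.symm
end

section
/- Let p be a prime, let n be a non-negative integer, and let K' be a subgroup of ℤ_p^n of order p^{d'} with d' ≤ n. Then for every integer d with 0 ≤ d ≤ n, the fraction of subgroups of ℤ_p^n of order p^d that contain K' (i.e., the number of subgroups K of order p^d with K' ⊆ K divided by β_p(n,d)) equals ∏_{0 ≤ i < d'} (p^{d−i} − 1)/(p^{n−i} − 1). In particular, writing D = p^d, this fraction equals Q(D) for the real polynomial Q(D) = ∏_{0 ≤ i < d'} (D/p^i − 1)/(p^{n−i} − 1) of degree exactly d' in D. -/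
open Polynomial

/-- The polynomial `Q(D) = ∏_{0 ≤ i < d'} (D/p^i − 1)/(p^{n−i} − 1)` in the variable `D`. -/
noncomputable def fractionPoly (p n d' : ℕ) : Polynomial ℝ :=
  ∏ i ∈ Finset.range d',
    Polynomial.C (((p : ℝ) ^ (n - i) - 1)⁻¹) *
      (Polynomial.C (((p : ℝ) ^ i)⁻¹) * Polynomial.X - 1)

/-!
Counting linearly independent `k`-tuples in an `m`-dimensional space over `𝔽_q` by the subspace
they span shows that there are `β_q(m, k) = ∏_{i<k} (q^{m-i} - 1)/(q^{k-i} - 1)` subspaces of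
dimension `k`. The `d`-dimensional subspaces containing a `d'`-dimensional subspace `W` are the
preimages of the `(d - d')`-dimensional subspaces of `V ⧸ W`, so there are `β_q(n - d', d - d')` of
them, and this is `β_q(n, d)` with its first `d'` factors removed.
-/

open Module Submodule Finset

noncomputable def gaussianBinomial (q : ℝ) (m k : ℕ) : ℝ :=
  ∏ i ∈ range k, (q ^ (m - i) - 1) / (q ^ (k - i) - 1)

section GaussianBinomial

variable {q : ℝ} {m k : ℕ}

theorem gaussianBinomial_pos (hq : 1 < q) (hk : k ≤ m) : 0 < gaussianBinomial q m k := by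
  refine prod_pos fun i hi => div_pos ?_ ?_ <;>
  · have := mem_range.mp hi
    exact sub_pos.mpr (one_lt_pow₀ hq (by omega))

theorem gaussianBinomial_eq_prod_mul {j : ℕ} (hj : j ≤ k) :
    gaussianBinomial q m k =
      (∏ i ∈ range j, (q ^ (m - i) - 1) / (q ^ (k - i) - 1)) *
        gaussianBinomial q (m - j) (k - j) := by
  obtain ⟨l, rfl⟩ := Nat.exists_eq_add_of_le hj
  simp only [gaussianBinomial, prod_range_add, Nat.add_sub_cancel_left, Nat.sub_sub,
    Nat.add_sub_add_left]

end GaussianBinomial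

theorem Nat.cast_prod_pow_sub_pow {q a k : ℕ} (hq : 0 < q) (hk : k ≤ a) :
    ((∏ i : Fin k, (q ^ a - q ^ (i : ℕ)) : ℕ) : ℝ) =
      (∏ i ∈ range k, (q : ℝ) ^ i) * ∏ i ∈ range k, ((q : ℝ) ^ (a - i) - 1) := by
  rw [Fin.prod_univ_eq_prod_range (fun i => q ^ a - q ^ i), Nat.cast_prod, ← prod_mul_distrib]
  refine prod_congr rfl fun i hi => ?_
  have hia : i ≤ a := by have := mem_range.mp hi; omega
  rw [Nat.cast_sub (Nat.pow_le_pow_right hq hia), mul_sub, ← pow_add, Nat.add_sub_cancel' hia]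
  push_cast
  ring

section Quotient

variable {K V : Type*} [Field K] [AddCommGroup V] [Module K V] [FiniteDimensional K V]

theorem Submodule.finrank_comap_mkQ (W : Submodule K V) (U : Submodule K (V ⧸ W)) :
    finrank K (U.comap W.mkQ) = finrank K U + finrank K W := by
  have h := LinearMap.finrank_range_add_finrank_ker (W.mkQ.domRestrict (U.comap W.mkQ))
  rw [LinearMap.range_domRestrict, map_comap_eq_self (by simp), LinearMap.ker_domRestrict,
    ker_mkQ] at h
  have hle : W ≤ U.comap W.mkQ := W.ker_mkQ.ge.trans (LinearMap.ker_le_comap _)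
  rw [← h, (comapSubtypeEquivOfLe hle).finrank_eq]

theorem card_finrank_eq_and_le {W : Submodule K V} {k : ℕ} (hWk : finrank K W ≤ k) :
    Nat.card {U : Submodule K V // finrank K U = k ∧ W ≤ U} =
      Nat.card {U : Submodule K (V ⧸ W) // finrank K U = k - finrank K W} := by
  refine Nat.card_congr (Equiv.symm ?_)
  refine (Equiv.subtypeEquiv (comapMkQRelIso W).toEquiv fun U => ?_).trans
    ((Equiv.subtypeSubtypeEquivSubtypeInter _ _).trans (Equiv.subtypeEquivRight fun U => and_comm))
  change _ ↔ finrank K (U.comap W.mkQ) = k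
  rw [finrank_comap_mkQ]
  omega

end Quotient

section Subspaces

variable {K V : Type*} [Field K] [Fintype K] [AddCommGroup V] [Module K V] [Finite V]

local notation "q" => Fintype.card K

def linearIndependentSpanEquiv {k : ℕ} (W : Submodule K V) (hW : finrank K W = k) :
    {s : {s : Fin k → V // LinearIndependent K s} // span K (Set.range s.1) = W} ≃
      {t : Fin k → W // LinearIndependent K t} where
  toFun s := ⟨fun i => ⟨s.1.1 i, s.2.le (subset_span ⟨i, rfl⟩)⟩,
    LinearIndependent.of_comp W.subtype s.1.2⟩
  invFun t := ⟨⟨W.subtype ∘ t.1, t.2.map' _ W.ker_subtype⟩, by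
    have : span K (Set.range t.1) = ⊤ :=
      t.2.span_eq_top_of_card_eq_finrank' (by rw [Fintype.card_fin, hW])
    rw [Set.range_comp, span_image, this, Submodule.map_top, range_subtype]⟩
  left_inv _ := rfl
  right_inv _ := rfl

theorem card_finrank_eq_mul_prod {k : ℕ} (hk : k ≤ finrank K V) :
    Nat.card {W : Submodule K V // finrank K W = k} * ∏ i : Fin k, (q ^ k - q ^ (i : ℕ)) =
      ∏ i : Fin k, (q ^ finrank K V - q ^ (i : ℕ)) := by
  have := Fintype.ofFinite {W : Submodule K V // finrank K W = k}
  let spanMap (s : {s : Fin k → V // LinearIndependent K s}) :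
      {W : Submodule K V // finrank K W = k} :=
    ⟨span K (Set.range s.1), by rw [finrank_span_eq_card s.2, Fintype.card_fin]⟩
  have hfiber (W : {W : Submodule K V // finrank K W = k}) :
      Nat.card {s // spanMap s = W} = ∏ i : Fin k, (q ^ k - q ^ (i : ℕ)) := by
    rw [Nat.card_congr ((Equiv.subtypeEquivRight fun s => Subtype.ext_iff).trans
      (linearIndependentSpanEquiv W.1 W.2)), card_linearIndependent W.2.ge, W.2]
  rw [← card_linearIndependent hk, Nat.card_congr (Equiv.sigmaFiberEquiv spanMap).symm,
    Nat.card_sigma, Finset.sum_congr rfl fun W _ => hfiber W, sum_const, card_univ,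
    smul_eq_mul, Nat.card_eq_fintype_card]

theorem card_finrank_eq_gaussianBinomial {k : ℕ} (hk : k ≤ finrank K V) :
    (Nat.card {W : Submodule K V // finrank K W = k} : ℝ) =
      gaussianBinomial q (finrank K V) k := by
  have hq : (1 : ℝ) < q := by exact_mod_cast Fintype.one_lt_card
  have hcount := congrArg (Nat.cast : ℕ → ℝ) (card_finrank_eq_mul_prod (K := K) (V := V) hk)
  rw [Nat.cast_mul, Nat.cast_prod_pow_sub_pow Fintype.card_pos le_rfl,
    Nat.cast_prod_pow_sub_pow Fintype.card_pos hk] at hcount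
  have hpow : ∏ i ∈ range k, (q : ℝ) ^ i ≠ 0 := prod_ne_zero_iff.mpr fun i _ => by positivity
  have hden : ∏ i ∈ range k, ((q : ℝ) ^ (k - i) - 1) ≠ 0 :=
    prod_ne_zero_iff.mpr fun i hi => by
      have := mem_range.mp hi
      exact (sub_pos.mpr (one_lt_pow₀ hq (by omega))).ne'
  rw [gaussianBinomial, prod_div_distrib, eq_div_iff hden]
  exact mul_left_cancel₀ hpow (by linear_combination hcount)

theorem card_finrank_eq_and_le_div_card (W : Submodule K V) {k : ℕ} (hk : k ≤ finrank K V) :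
    (Nat.card {U : Submodule K V // finrank K U = k ∧ W ≤ U} : ℝ) /
        Nat.card {U : Submodule K V // finrank K U = k} =
      ∏ i ∈ range (finrank K W),
        (((q : ℝ) ^ k / (q : ℝ) ^ i - 1) / ((q : ℝ) ^ (finrank K V - i) - 1)) := by
  have hq : (1 : ℝ) < q := by exact_mod_cast Fintype.one_lt_card
  rcases lt_or_ge k (finrank K W) with hkW | hWk
  · have hempty : IsEmpty {U : Submodule K V // finrank K U = k ∧ W ≤ U} :=
      ⟨fun U => hkW.not_ge ((finrank_mono U.2.2).trans_eq U.2.1)⟩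
    rw [Nat.card_of_isEmpty, Nat.cast_zero, zero_div, eq_comm]
    exact prod_eq_zero (mem_range.mpr hkW) (by simp)
  have : Finite (V ⧸ W) := Finite.of_surjective W.mkQ W.mkQ_surjective
  have hquot : finrank K (V ⧸ W) = finrank K V - finrank K W := finrank_quotient W
  rw [card_finrank_eq_and_le hWk, card_finrank_eq_gaussianBinomial hk,
    card_finrank_eq_gaussianBinomial (by omega), hquot, gaussianBinomial_eq_prod_mul hWk,
    div_mul_cancel_right₀ (gaussianBinomial_pos hq (by omega)).ne', ← prod_inv_distrib]
  refine prod_congr rfl fun i hi => ?_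
  rw [inv_div, pow_sub₀ _ (by positivity) (by have := mem_range.mp hi; omega), ← div_eq_mul_inv]

end Subspaces

namespace AddSubgroup

variable {p : ℕ} [Fact p.Prime] {M : Type*} [AddCommGroup M] [Module (ZMod p) M] [Finite M]

theorem natCard_eq_pow_iff_finrank (S : AddSubgroup M) {d : ℕ} :
    Nat.card S = p ^ d ↔ finrank (ZMod p) (toZModSubmodule p S) = d := by
  change Nat.card (toZModSubmodule p S) = p ^ d ↔ _
  rw [natCard_eq_pow_finrank (K := ZMod p), Nat.card_zmod]
  exact (Nat.pow_right_injective (Fact.out : p.Prime).two_le).eq_iff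

theorem card_natCard_eq_and_le_div_card (T : AddSubgroup M) {d' d : ℕ} (hT : Nat.card T = p ^ d')
    (hd : d ≤ finrank (ZMod p) M) :
    (Nat.card {S : AddSubgroup M // Nat.card S = p ^ d ∧ T ≤ S} : ℝ) /
        Nat.card {S : AddSubgroup M // Nat.card S = p ^ d} =
      ∏ i ∈ range d', (((p : ℝ) ^ d / (p : ℝ) ^ i - 1) /
        ((p : ℝ) ^ (finrank (ZMod p) M - i) - 1)) := by
  let e := (toZModSubmodule p (M := M)).toEquiv
  rw [Nat.card_congr (e.subtypeEquiv (q := fun U : Submodule (ZMod p) M =>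
      finrank (ZMod p) U = d ∧ toZModSubmodule p T ≤ U) fun S =>
      and_congr (natCard_eq_pow_iff_finrank S) (toZModSubmodule p).le_iff_le.symm),
    Nat.card_congr (e.subtypeEquiv (q := fun U : Submodule (ZMod p) M => finrank (ZMod p) U = d)
      fun S => natCard_eq_pow_iff_finrank S),
    card_finrank_eq_and_le_div_card _ hd, (natCard_eq_pow_iff_finrank T).mp hT, ZMod.card]

end AddSubgroup

theorem eval_fractionPoly (p n d' : ℕ) (x : ℝ) :
    (fractionPoly p n d').eval x =
      ∏ i ∈ range d', ((x / (p : ℝ) ^ i - 1) / ((p : ℝ) ^ (n - i) - 1)) := by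
  simp only [fractionPoly, eval_prod, eval_mul, eval_sub, eval_C, eval_X, eval_one]
  refine prod_congr rfl fun i _ => ?_
  ring

theorem natDegree_fractionPoly {p n d' : ℕ} (hp : 1 < p) (hd' : d' ≤ n) :
    (fractionPoly p n d').natDegree = d' := by
  have hp' : (1 : ℝ) < p := by exact_mod_cast hp
  have hfactor : ∀ i ∈ range d', (C (((p : ℝ) ^ (n - i) - 1)⁻¹) *
      (C (((p : ℝ) ^ i)⁻¹) * X - 1)).natDegree = 1 := fun i hi => by
    have := mem_range.mp hi
    rw [natDegree_C_mul (inv_ne_zero (sub_pos.mpr (one_lt_pow₀ hp' (by omega))).ne'),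
      ← C_1, natDegree_sub_C, natDegree_C_mul_X _ (by positivity)]
  rw [fractionPoly, natDegree_prod _ _ fun i hi => ne_zero_of_natDegree_gt (hfactor i hi).ge,
    sum_congr rfl hfactor, sum_const, card_range, smul_eq_mul, mul_one]

/-- For a prime `p` and a subgroup `K'` of `ℤ_p^n = (ZMod p)^n` of order `p^{d'}` with
`d' ≤ n`: for every `0 ≤ d ≤ n`, the fraction of subgroups of `ℤ_p^n` of order `p^d`
that contain `K'` equals `∏_{0 ≤ i < d'} (p^{d−i} − 1)/(p^{n−i} − 1)`; in particular,
writing `D = p^d`, this fraction equals `Q(D)` for the real polynomial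
`Q(D) = ∏_{0 ≤ i < d'} (D/p^i − 1)/(p^{n−i} − 1)`, which has degree exactly `d'` in `D`. -/
theorem fraction_subgroups_containing (p n d' : ℕ) (hp : p.Prime)
    (K' : AddSubgroup (Fin n → ZMod p)) (hK' : Nat.card K' = p ^ d') (hd' : d' ≤ n) :
    (∀ d : ℕ, d ≤ n →
      (Nat.card {K : AddSubgroup (Fin n → ZMod p) // Nat.card K = p ^ d ∧ K' ≤ K} : ℝ) /
          (Nat.card {K : AddSubgroup (Fin n → ZMod p) // Nat.card K = p ^ d} : ℝ) =
        ∏ i ∈ Finset.range d',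
          (((p : ℝ) ^ d / (p : ℝ) ^ i - 1) / ((p : ℝ) ^ (n - i) - 1))) ∧
    (fractionPoly p n d').natDegree = d' ∧
    (∀ d : ℕ, d ≤ n →
      (Nat.card {K : AddSubgroup (Fin n → ZMod p) // Nat.card K = p ^ d ∧ K' ≤ K} : ℝ) /
          (Nat.card {K : AddSubgroup (Fin n → ZMod p) // Nat.card K = p ^ d} : ℝ) =
        (fractionPoly p n d').eval ((p : ℝ) ^ d)) := by
  have : Fact p.Prime := ⟨hp⟩
  have hfraction (d : ℕ) (hd : d ≤ n) :=
    finrank_fin_fun (ZMod p) ▸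
      AddSubgroup.card_natCard_eq_and_le_div_card K' hK' (d := d) (by simpa using hd)
  exact ⟨hfraction, natDegree_fractionPoly hp.one_lt hd',
    fun d hd => by rw [hfraction d hd, eval_fractionPoly]⟩
end

section
/- Let p be a prime, let m be a non-negative integer, let w ≥ 1, and let a₁, …, a_w ∈ ℤ_p^m. For each integer e with 0 ≤ e ≤ m, let λ(e) denote the fraction of subgroups H of ℤ_p^m of order p^e such that a_i − a_j ∉ H for all i ≠ j (i.e., a₁, …, a_w lie in pairwise distinct cosets of H). Then there exists a real polynomial P with deg(P) ≤ w such that λ(e) = P(p^e) for every integer e with 0 ≤ e ≤ m. -/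
/-!
Subgroups of `(ZMod p)^m` are the `𝔽_p`-subspaces, and `a_i - a_j ∉ H` for all `i ≠ j` is an
avoidance condition, so by inclusion–exclusion over sets `t` of pairs `(i, j)` the fraction
`λ(e)` is an alternating sum of the fractions of `e`-dimensional subspaces containing
`S_t = span {a_i - a_j | (i, j) ∈ t}`. Counting pairs `(s, W)` of a linearly independent
`k`-tuple `s` and an `e`-dimensional subspace `W ⊇ s` in two ways shows that this fraction is
`∏_{i < k} (p^e - p^i) / (p^m - p^i)` with `k = dim S_t`, a polynomial of degree `k` in `p^e`.
Finally `dim S_t ≤ w`, since all the `S_t` lie in the span of `a_1, …, a_w`.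
-/

open Module Finset Polynomial

noncomputable def superspaceRatio (q : ℝ) (n k : ℕ) : ℝ[X] :=
  ∏ i ∈ range k, C (q ^ n - q ^ i)⁻¹ * (X - C (q ^ i))

theorem natDegree_superspaceRatio_le (q : ℝ) (n k : ℕ) :
    (superspaceRatio q n k).natDegree ≤ k := by
  refine (natDegree_prod_le _ _).trans ?_
  refine (sum_le_card_nsmul _ _ 1 fun i _ => ?_).trans (by simp)
  exact (natDegree_C_mul_le _ _).trans (natDegree_X_sub_C_le _)

theorem eval_superspaceRatio (q x : ℝ) (n k : ℕ) :
    (superspaceRatio q n k).eval x = ∏ i ∈ range k, (x - q ^ i) / (q ^ n - q ^ i) := by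
  simp [superspaceRatio, eval_prod, div_eq_inv_mul]

namespace Submodule

section

variable {K V : Type*} [Field K] [AddCommGroup V] [Module K V]

noncomputable def numSuperspaces (S : Submodule K V) (e : ℕ) : ℕ :=
  Nat.card {W : Submodule K V // finrank K W = e ∧ S ≤ W}

theorem card_linearIndependent_forall_mem (W : Submodule K V) (k : ℕ) :
    Nat.card {s : Fin k → V // (∀ i, s i ∈ W) ∧ LinearIndependent K s} =
      Nat.card {t : Fin k → W // LinearIndependent K t} :=
  Nat.card_congr <| (Equiv.subtypeSubtypeEquivSubtypeInter _ _).symm.trans <|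
    Equiv.subtypeEquiv Equiv.subtypePiEquivPi fun s =>
      W.subtype.linearIndependent_iff (v := Equiv.subtypePiEquivPi s) W.ker_subtype

variable [FiniteDimensional K V]

theorem finrank_span_image_sub_le {ι : Type*} [Fintype ι] (a : ι → V) (t : Set (ι × ι)) :
    finrank K (span K ((fun ij => a ij.1 - a ij.2) '' t)) ≤ Fintype.card ι := by
  have hle : span K ((fun ij : ι × ι => a ij.1 - a ij.2) '' t) ≤ span K (Set.range a) :=
    span_le.2 <| Set.image_subset_iff.2 fun ij _ =>
      sub_mem (subset_span (Set.mem_range_self ij.1)) (subset_span (Set.mem_range_self ij.2))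
  exact (finrank_mono hle).trans (finrank_range_le_card a)

theorem numSuperspaces_eq_of_finrank_eq {S S' : Submodule K V}
    (h : finrank K S = finrank K S') (e : ℕ) :
    numSuperspaces S e = numSuperspaces S' e := by
  let f := LinearEquiv.ofFinrankEq S S' h
  obtain ⟨g, hg⟩ := exists_linearEquiv_restrict_eq f
  have hgS : S.map (g : V →ₗ[K] V) = S' := by
    ext y
    refine ⟨?_, fun hy => ?_⟩
    · rintro ⟨x, hx, rfl⟩
      simp [← hg ⟨x, hx⟩]
    · obtain ⟨x, hx⟩ := f.surjective ⟨y, hy⟩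
      exact ⟨x, x.2, by simpa [← hg x] using congrArg Subtype.val hx⟩
  refine Nat.card_congr ((orderIsoMapComap g).toEquiv.subtypeEquiv fun W => ?_)
  change _ ↔ finrank K (W.map (g : V →ₗ[K] V)) = e ∧ S' ≤ W.map (g : V →ₗ[K] V)
  rw [LinearEquiv.finrank_map_eq, ← hgS, map_le_map_iff_of_injective g.injective]

theorem numSuperspaces_eq_zero {S : Submodule K V} {e : ℕ} (h : e < finrank K S) :
    numSuperspaces S e = 0 :=
  have : IsEmpty {W : Submodule K V // finrank K W = e ∧ S ≤ W} :=
    ⟨fun W => absurd (finrank_mono W.2.2) (by rw [W.2.1]; exact h.not_ge)⟩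
  Nat.card_of_isEmpty

end

section

variable {K V : Type*} [Field K] [AddCommGroup V] [Module K V] [Finite V]

theorem numSuperspaces_bot_pos {e : ℕ} (he : e ≤ finrank K V) :
    0 < numSuperspaces (⊥ : Submodule K V) e := by
  let b := finBasis K V
  have hli := b.linearIndependent.comp _ (Fin.castLE_injective he)
  have : Nonempty {W : Submodule K V // finrank K W = e ∧ ⊥ ≤ W} :=
    ⟨⟨span K (Set.range (b ∘ Fin.castLE he)), by simp [finrank_span_eq_card hli], bot_le⟩⟩
  exact Nat.card_pos

theorem card_forall_notMem_eq_sum {ι : Type*} (x : ι → V) (D : Finset ι) (e : ℕ) :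
    (Nat.card {W : Submodule K V // finrank K W = e ∧ ∀ i ∈ D, x i ∉ W} : ℤ) =
      ∑ t ∈ D.powerset, (-1) ^ #t * (numSuperspaces (span K (x '' t)) e : ℤ) := by
  classical
  have := Fintype.ofFinite (Submodule K V)
  let containing i := (univ : Finset {W : Submodule K V // finrank K W = e}).filter (x i ∈ ·.1)
  have hcard : ∀ Q : Submodule K V → Prop,
      Nat.card {W : Submodule K V // finrank K W = e ∧ Q W} =
        #(univ.filter fun W : {W : Submodule K V // finrank K W = e} => Q W) := fun Q => by
    rw [← Nat.card_congr (Equiv.subtypeSubtypeEquivSubtypeInter _ _), Nat.card_eq_fintype_card,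
      Fintype.card_subtype]
  have hinf : ∀ t : Finset ι,
      #(t.inf containing) = numSuperspaces (span K (x '' t)) e := fun t => by
    rw [numSuperspaces, hcard]
    congr 1
    ext W
    rw [Finset.mem_inf]
    simp [containing, span_le, Set.subset_def]
  simp only [hcard, ← hinf, ← inclusion_exclusion_card_inf_compl D containing]
  congr 2
  ext W
  rw [Finset.mem_inf]
  simp [containing]

variable [Fintype K]

local notation "q" => Fintype.card K

-- Double count the pairs `(s, W)` of a linearly independent `k`-tuple `s` and an
-- `e`-dimensional subspace `W` containing it.
theorem numSuperspaces_mul_prod {S : Submodule K V} {e : ℕ} (he : finrank K S ≤ e) :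
    numSuperspaces S e * ∏ i : Fin (finrank K S), (q ^ finrank K V - q ^ (i : ℕ)) =
      numSuperspaces (⊥ : Submodule K V) e *
        ∏ i : Fin (finrank K S), (q ^ e - q ^ (i : ℕ)) := by
  classical
  have := Fintype.ofFinite V
  have := Fintype.ofFinite (Submodule K V)
  set k := finrank K S
  set indep : Finset (Fin k → V) := univ.filter fun s => LinearIndependent K s
  set grass : Finset (Submodule K V) := univ.filter (finrank K · = e)
  have key := sum_card_bipartiteAbove_eq_sum_card_bipartiteBelow (s := indep) (t := grass)
    (r := fun s W => ∀ i, s i ∈ W)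
  have h_indep : #indep = ∏ i : Fin k, (q ^ finrank K V - q ^ (i : ℕ)) := by
    rw [← card_linearIndependent (finrank_le S), Nat.card_eq_fintype_card, Fintype.card_subtype]
  have h_grass : #grass = numSuperspaces (⊥ : Submodule K V) e := by
    simp [numSuperspaces, Nat.card_eq_fintype_card, Fintype.card_subtype, grass]
  have h_above : ∀ s ∈ indep,
      #(grass.bipartiteAbove (fun s W => ∀ i, s i ∈ W) s) = numSuperspaces S e := by
    intro s hs
    have hspan : finrank K (span K (Set.range s)) = k := by
      rw [finrank_span_eq_card (mem_filter.1 hs).2, Fintype.card_fin]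
    rw [← numSuperspaces_eq_of_finrank_eq hspan, numSuperspaces, Nat.card_eq_fintype_card,
      Fintype.card_subtype, bipartiteAbove, filter_filter]
    simp [span_le, Set.range_subset_iff]
  have h_below : ∀ W ∈ grass, #(indep.bipartiteBelow (fun s W => ∀ i, s i ∈ W) W) =
      ∏ i : Fin k, (q ^ e - q ^ (i : ℕ)) := by
    intro W hW
    have hWe : finrank K W = e := (mem_filter.1 hW).2
    rw [bipartiteBelow, filter_filter, ← hWe, ← card_linearIndependent (he.trans_eq hWe.symm),
      ← card_linearIndependent_forall_mem, Nat.card_eq_fintype_card, Fintype.card_subtype]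
    simp [and_comm]
  rw [sum_congr rfl h_above, sum_congr rfl h_below, sum_const, sum_const, h_indep, h_grass] at key
  simpa [mul_comm] using key

theorem numSuperspaces_eq_mul_eval (S : Submodule K V) (e : ℕ) :
    (numSuperspaces S e : ℝ) = numSuperspaces (⊥ : Submodule K V) e *
      (superspaceRatio q (finrank K V) (finrank K S)).eval ((q : ℝ) ^ e) := by
  have hq : 1 < q := Fintype.one_lt_card
  rw [eval_superspaceRatio]
  rcases le_or_gt (finrank K S) e with hke | hek
  · have hcast : ∀ a, finrank K S ≤ a →
        ((∏ i : Fin (finrank K S), (q ^ a - q ^ (i : ℕ)) : ℕ) : ℝ) =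
          ∏ i ∈ range (finrank K S), ((q : ℝ) ^ a - q ^ i) := fun a ha => by
      rw [Fin.prod_univ_eq_prod_range (fun i => q ^ a - q ^ i), Nat.cast_prod]
      refine prod_congr rfl fun i hi => ?_
      rw [Nat.cast_sub (Nat.pow_le_pow_right hq.le ((mem_range.1 hi).le.trans ha)), Nat.cast_pow,
        Nat.cast_pow]
    have hden : ∏ i ∈ range (finrank K S), ((q : ℝ) ^ finrank K V - q ^ i) ≠ 0 :=
      prod_ne_zero_iff.2 fun i hi => sub_ne_zero.2 (pow_lt_pow_right₀ (by exact_mod_cast hq)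
        ((mem_range.1 hi).trans_le S.finrank_le)).ne'
    have key := congrArg (Nat.cast : ℕ → ℝ) (numSuperspaces_mul_prod hke)
    push_cast only [Nat.cast_mul] at key
    rw [hcast _ S.finrank_le, hcast _ hke] at key
    rw [prod_div_distrib, mul_div_assoc', eq_div_iff hden, key]
  · rw [numSuperspaces_eq_zero hek, prod_eq_zero (mem_range.2 hek) (by simp), Nat.cast_zero,
      mul_zero]

theorem card_forall_notMem_div_eq_eval {ι : Type*} (x : ι → V) (D : Finset ι) {e : ℕ}
    (he : e ≤ finrank K V) :
    (Nat.card {W : Submodule K V // finrank K W = e ∧ ∀ i ∈ D, x i ∉ W} : ℝ) /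
        numSuperspaces (⊥ : Submodule K V) e =
      (∑ t ∈ D.powerset, C ((-1) ^ #t) * superspaceRatio q (finrank K V)
        (finrank K (span K (x '' t)))).eval ((q : ℝ) ^ e) := by
  have hbot : (numSuperspaces (⊥ : Submodule K V) e : ℝ) ≠ 0 := by
    exact_mod_cast (numSuperspaces_bot_pos he).ne'
  have key := congrArg (Int.cast : ℤ → ℝ) (card_forall_notMem_eq_sum (K := K) x D e)
  push_cast at key
  rw [key, sum_div, eval_finsetSum]
  refine sum_congr rfl fun t _ => ?_
  rw [eval_mul, eval_C, numSuperspaces_eq_mul_eval]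
  field_simp

end

end Submodule

theorem AddSubgroup.natCard_eq_pow_iff {p : ℕ} [Fact p.Prime] {M : Type*} [AddCommGroup M]
    [Module (ZMod p) M] [Finite M] (H : AddSubgroup M) (e : ℕ) :
    Nat.card H = p ^ e ↔ finrank (ZMod p) (H.toZModSubmodule p) = e := by
  change Nat.card (H.toZModSubmodule p) = p ^ e ↔ _
  rw [Module.natCard_eq_pow_finrank (K := ZMod p), Nat.card_zmod]
  exact (Nat.pow_right_injective (Fact.out : p.Prime).two_le).eq_iff

theorem fraction_subgroups_distinct_cosets_general (p m w : ℕ) (hp : p.Prime)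
    (a : Fin w → (Fin m → ZMod p)) :
    ∃ P : Polynomial ℝ, P.natDegree ≤ w ∧
      ∀ e : ℕ, e ≤ m →
        (Nat.card {H : AddSubgroup (Fin m → ZMod p) //
            Nat.card H = p ^ e ∧ ∀ i j : Fin w, i ≠ j → a i - a j ∉ H} : ℝ) /
          (Nat.card {H : AddSubgroup (Fin m → ZMod p) // Nat.card H = p ^ e} : ℝ) =
        P.eval ((p : ℝ) ^ e) := by
  have := Fact.mk hp
  let x : Fin w × Fin w → (Fin m → ZMod p) := fun ij => a ij.1 - a ij.2
  refine ⟨∑ t ∈ (univ : Finset (Fin w)).offDiag.powerset, C ((-1) ^ #t) *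
    superspaceRatio p m (finrank (ZMod p) (Submodule.span (ZMod p) (x '' t))), ?_, fun e he => ?_⟩
  · refine natDegree_sum_le_of_forall_le _ _ fun t _ => (natDegree_C_mul_le _ _).trans ?_
    exact (natDegree_superspaceRatio_le _ _ _).trans
      (by simpa using Submodule.finrank_span_image_sub_le a t)
  have hnum : Nat.card {H : AddSubgroup (Fin m → ZMod p) //
      Nat.card H = p ^ e ∧ ∀ i j : Fin w, i ≠ j → a i - a j ∉ H} =
      Nat.card {W : Submodule (ZMod p) (Fin m → ZMod p) //
        finrank (ZMod p) W = e ∧ ∀ ij ∈ (univ : Finset (Fin w)).offDiag, x ij ∉ W} :=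
    Nat.card_congr <| (AddSubgroup.toZModSubmodule p).toEquiv.subtypeEquiv fun H => by
      simp [AddSubgroup.natCard_eq_pow_iff, x]
  have hden : Nat.card {H : AddSubgroup (Fin m → ZMod p) // Nat.card H = p ^ e} =
      Submodule.numSuperspaces (⊥ : Submodule (ZMod p) (Fin m → ZMod p)) e :=
    Nat.card_congr <| (AddSubgroup.toZModSubmodule p).toEquiv.subtypeEquiv fun H => by
      simp [AddSubgroup.natCard_eq_pow_iff]
  have h := Submodule.card_forall_notMem_div_eq_eval (K := ZMod p) x univ.offDiag
    (by simpa using he)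
  rw [ZMod.card, finrank_fin_fun] at h
  rw [hnum, hden, h]

/-- Let `p` be a prime, `m ≥ 0`, `w ≥ 1`, and `a₁, …, a_w ∈ ℤ_p^m = (ZMod p)^m`.
For `0 ≤ e ≤ m` let `λ(e)` be the fraction of subgroups `H` of `ℤ_p^m` of order `p^e`
such that `a_i − a_j ∉ H` for all `i ≠ j` (i.e. the `a_i` lie in pairwise distinct
cosets of `H`).  Then there is a real polynomial `P` of degree at most `w` with
`λ(e) = P(p^e)` for every `0 ≤ e ≤ m`. -/
theorem fraction_subgroups_distinct_cosets (p m w : ℕ) (hp : p.Prime) (hw : 1 ≤ w)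
    (a : Fin w → (Fin m → ZMod p)) :
    ∃ P : Polynomial ℝ, P.natDegree ≤ w ∧
      ∀ e : ℕ, e ≤ m →
        (Nat.card {H : AddSubgroup (Fin m → ZMod p) //
            Nat.card H = p ^ e ∧ ∀ i j : Fin w, i ≠ j → a i - a j ∉ H} : ℝ) /
          (Nat.card {H : AddSubgroup (Fin m → ZMod p) // Nat.card H = p ^ e} : ℝ) =
        P.eval ((p : ℝ) ^ e) :=
  fraction_subgroups_distinct_cosets_general p m w hp a
end

section
/- Fix finite types X and Z, a finite additive abelian group Y, a non-negative integer T, a distinguished initial basis vector e_init = e_{(x₀, 0, z₀)} of the Hilbert space ℂ^{X × Y × Z} (with second coordinate equal to 0 ∈ Y), a subset G ⊆ X × Y × Z of 'accepting' basis elements, and unitary operators U₀, U₁, …, U_T on ℂ^{X × Y × Z}. For a function f : X → Y, let U_f be the unitary on ℂ^{X × Y × Z} permuting basis vectors by e_{(x,y,z)} ↦ e_{(x, y + f(x), z)}, and define the acceptance probability P(f) := Σ_{b ∈ G} |⟨e_b, U_T U_f U_{T−1} U_f ⋯ U_1 U_f U₀ e_init⟩|², i.e., the squared norm of the projection onto span{e_b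 : b ∈ G} of the final state obtained by interleaving T applications of U_f with U₀, …, U_T. Then there exist a finite set S of partial functions s : X ⇀ Y, each with |dom(s)| ≤ 2T, and real numbers c_s for s ∈ S, such that for every function f : X → Y, P(f) = Σ_{s ∈ S} c_s · I_s(f). -/
open scoped BigOperators

noncomputable section

/-- The standard basis vector `e_b` of `ℂ^B`. -/
def basisVec {B : Type*} [DecidableEq B] (b : B) : B → ℂ :=
  fun b' => if b' = b then 1 else 0

/-- `runAlg U M T v = U_T M U_{T−1} M ⋯ U_1 M U_0 v`: the state after interleaving
`T` applications of the oracle matrix `M` with the unitaries `U_0, …, U_T`. -/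
def runAlg {B : Type*} [Fintype B] (U : ℕ → Matrix B B ℂ) (M : Matrix B B ℂ) :
    ℕ → (B → ℂ) → (B → ℂ)
  | 0, v => (U 0).mulVec v
  | t + 1, v => (U (t + 1)).mulVec (M.mulVec (runAlg U M t v))

/-- The oracle unitary `U_f` permuting basis vectors by `e_(x,y,z) ↦ e_(x, y + f x, z)`. -/
def oracleMatrix {X Y Z : Type*} [DecidableEq X] [DecidableEq Y] [DecidableEq Z]
    [AddCommGroup Y] (f : X → Y) : Matrix (X × Y × Z) (X × Y × Z) ℂ :=
  Matrix.of fun b' b => if b' = (b.1, b.2.1 + f b.1, b.2.2) then 1 else 0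

open Classical in
/-- The indicator `I_s(f)`: equals `1` if the total function `f` extends the partial
function `s` (encoded as `X → Option Y`), and `0` otherwise. -/
def extendsIndicator {X Y : Type*} (s : X → Option Y) (f : X → Y) : ℝ :=
  if ∀ x y, s x = some y → f x = y then 1 else 0

/-- The size of the domain of a partial function `s : X ⇀ Y`. -/
def domCard {X Y : Type*} [Fintype X] (s : X → Option Y) : ℕ :=
  (Finset.univ.filter fun x => (s x).isSome).card

/-!
View the final amplitudes as functions of the oracle `f`. The entries of `U_f` in the columns
`b.1 = x` depend on `f` only through `f x`, so they are linear combinations of indicators `I_s`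
with `|dom s| ≤ 1`. Since `I_s · I_t` is either `0` or `I_{s ∪ t}`, the degree (the largest
`|dom s|` needed) is subadditive under any bilinear operation, and unaffected by linear maps.
Hence every amplitude after `T` queries has degree `≤ T`, and the acceptance probability, a sum
of `re² + im²` of amplitudes, has degree `≤ 2T`.
-/

open Finset

section PartialFunctions

variable {X Y : Type*}

def Compatible (s t : X → Option Y) : Prop :=
  ∀ x, ∀ a ∈ s x, ∀ b ∈ t x, a = b

open Classical in
lemma extendsIndicator_mul (s t : X → Option Y) (f : X → Y) :
    extendsIndicator s f * extendsIndicator t f =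
      if Compatible s t then extendsIndicator (fun x => (s x).or (t x)) f else 0 := by
  have key : ((∀ x y, s x = some y → f x = y) ∧ ∀ x y, t x = some y → f x = y) ↔
      Compatible s t ∧ ∀ x y, (s x).or (t x) = some y → f x = y := by
    constructor
    · rintro ⟨hs, ht⟩
      refine ⟨fun x a ha b hb => (hs x a ha).symm.trans (ht x b hb), fun x y h => ?_⟩
      cases hsx : s x <;> simp only [hsx, Option.none_or, Option.some_or] at h
      exacts [ht x y h, hs x y (hsx.trans h)]
    · rintro ⟨hc, h⟩
      refine ⟨fun x y hy => h x y (by simp [hy]), fun x y hy => ?_⟩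
      cases hsx : s x with
      | none => exact h x y (by simp [hsx, hy])
      | some a => rw [← hc x a hsx y hy]; exact h x a (by simp [hsx])
  unfold extendsIndicator
  rw [ite_zero_mul_ite_zero, one_mul, if_congr key rfl rfl, ite_and]

lemma domCard_or_le [Fintype X] (s t : X → Option Y) :
    domCard (fun x => (s x).or (t x)) ≤ domCard s + domCard t := by
  classical
  unfold domCard
  simp only [Option.isSome_or, Bool.or_eq_true, filter_or]
  exact card_union_le _ _

lemma extendsIndicator_none (f : X → Y) : extendsIndicator (fun _ => none) f = 1 := by
  simp [extendsIndicator]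

open Classical in
lemma extendsIndicator_update_none [DecidableEq X] (x : X) (y : Y) (f : X → Y) :
    extendsIndicator (Function.update (fun _ => none) x (some y)) f =
      if f x = y then 1 else 0 := by
  unfold extendsIndicator
  congr 1
  apply propext
  constructor
  · exact fun h => h x y (by simp)
  · intro h x' y' hx'
    by_cases hx : x' = x
    · subst hx; simp_all
    · simp [hx] at hx'

lemma domCard_update_none [Fintype X] [DecidableEq X] (x : X) (y : Y) :
    domCard (Function.update (fun _ => (none : Option Y)) x (some y)) = 1 := by
  simp [domCard, Function.update_apply, Finset.filter_eq']

end PartialFunctions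

section QueryDegree

variable {X Y : Type*} [Fintype X]
variable {M N P : Type*} [AddCommGroup M] [Module ℝ M] [AddCommGroup N] [Module ℝ N]
  [AddCommGroup P] [Module ℝ P]

variable (X Y M) in
def queryDegreeLE (d : ℕ) : Submodule ℝ ((X → Y) → M) :=
  Submodule.span ℝ {F | ∃ s v, domCard s ≤ d ∧ F = fun f => extendsIndicator s f • v}

lemma extendsIndicator_smul_mem_queryDegreeLE {s : X → Option Y} {d : ℕ} (hs : domCard s ≤ d)
    (v : M) :
    (fun f => extendsIndicator s f • v) ∈ queryDegreeLE X Y M d :=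
  Submodule.subset_span ⟨s, v, hs, rfl⟩

lemma const_mem_queryDegreeLE (v : M) : (fun _ => v) ∈ queryDegreeLE X Y M 0 := by
  simpa [extendsIndicator_none] using extendsIndicator_smul_mem_queryDegreeLE
    (s := fun _ : X => (none : Option Y)) (by simp [domCard]) v

lemma apply_mem_queryDegreeLE_one [DecidableEq X] [Fintype Y] (x : X) (h : Y → M) :
    (fun f : X → Y => h (f x)) ∈ queryDegreeLE X Y M 1 := by
  classical
  have hsum : (fun f : X → Y => h (f x)) = ∑ y, fun f =>
      extendsIndicator (Function.update (fun _ => none) x (some y)) f • h y := by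
    funext f
    simp [extendsIndicator_update_none]
  rw [hsum]
  exact Submodule.sum_mem _ fun y _ =>
    extendsIndicator_smul_mem_queryDegreeLE (domCard_update_none x y).le (h y)

lemma comp_mem_queryDegreeLE (L : M →ₗ[ℝ] N) {F : (X → Y) → M} {d : ℕ}
    (hF : F ∈ queryDegreeLE X Y M d) : (fun f => L (F f)) ∈ queryDegreeLE X Y N d := by
  refine Submodule.map_span_le (LinearMap.compLeft L (X → Y)) _ _ |>.mpr ?_ ⟨F, hF, rfl⟩
  rintro _ ⟨s, v, hs, rfl⟩
  simpa [LinearMap.compLeft, Function.comp_def] using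
    extendsIndicator_smul_mem_queryDegreeLE hs (L v)

def pointwiseBilin (β : M →ₗ[ℝ] N →ₗ[ℝ] P) :
    ((X → Y) → M) →ₗ[ℝ] ((X → Y) → N) →ₗ[ℝ] ((X → Y) → P) :=
  LinearMap.mk₂ ℝ (fun F G f => β (F f) (G f))
    (fun _ _ _ => by ext; simp) (fun _ _ _ => by ext; simp)
    (fun _ _ _ => by ext; simp) (fun _ _ _ => by ext; simp)

lemma bilin_mem_queryDegreeLE (β : M →ₗ[ℝ] N →ₗ[ℝ] P)
    {F : (X → Y) → M} {G : (X → Y) → N} {d e : ℕ}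
    (hF : F ∈ queryDegreeLE X Y M d) (hG : G ∈ queryDegreeLE X Y N e) :
    (fun f => β (F f) (G f)) ∈ queryDegreeLE X Y P (d + e) := by
  suffices Submodule.map₂ (pointwiseBilin β) (queryDegreeLE X Y M d) (queryDegreeLE X Y N e) ≤
      queryDegreeLE X Y P (d + e) from this (Submodule.apply_mem_map₂ _ hF hG)
  rw [queryDegreeLE, queryDegreeLE, Submodule.map₂_span_span, Submodule.span_le]
  rintro _ ⟨_, ⟨s, v, hs, rfl⟩, _, ⟨t, w, ht, rfl⟩, rfl⟩
  have hprod : (pointwiseBilin β (fun f => extendsIndicator s f • v)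
      fun f => extendsIndicator t f • w) =
      fun f => (extendsIndicator s f * extendsIndicator t f) • β v w := by
    ext f
    simp [pointwiseBilin, mul_smul, smul_comm (extendsIndicator t f)]
  simp only [hprod, extendsIndicator_mul]
  split_ifs
  · exact extendsIndicator_smul_mem_queryDegreeLE
      ((domCard_or_le s t).trans (add_le_add hs ht)) _
  · simp only [zero_smul]
    exact (queryDegreeLE X Y P (d + e)).zero_mem

lemma exists_sum_of_mem_queryDegreeLE [DecidableEq X] [Fintype Y] {F : (X → Y) → M} {d : ℕ}
    (hF : F ∈ queryDegreeLE X Y M d) :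
    ∃ c : (X → Option Y) → M,
      ∀ f, F f = ∑ s ∈ univ.filter (domCard · ≤ d), extendsIndicator s f • c s := by
  classical
  induction hF using Submodule.span_induction with
  | mem _ hF =>
    obtain ⟨s, v, hs, rfl⟩ := hF
    exact ⟨Pi.single s v, fun f => by simp [Pi.single_apply, hs]⟩
  | zero => exact ⟨0, fun f => by simp⟩
  | add _ _ _ _ hF hG =>
    obtain ⟨c, hc⟩ := hF
    obtain ⟨c', hc'⟩ := hG
    exact ⟨c + c', fun f => by simp [hc, hc', sum_add_distrib]⟩
  | smul a _ _ hF =>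
    obtain ⟨c, hc⟩ := hF
    exact ⟨a • c, fun f => by simp [hc, smul_sum, smul_comm a]⟩

lemma sum_sq_norm_mem_queryDegreeLE {B : Type*} {F : (X → Y) → B → ℂ} {d : ℕ}
    (hF : F ∈ queryDegreeLE X Y (B → ℂ) d) (G : Finset B) :
    (fun f => ∑ b ∈ G, ‖F f b‖ ^ 2) ∈ queryDegreeLE X Y ℝ (2 * d) := by
  have hre (b : B) := comp_mem_queryDegreeLE (Complex.reLm ∘ₗ LinearMap.proj b) hF
  have him (b : B) := comp_mem_queryDegreeLE (Complex.imLm ∘ₗ LinearMap.proj b) hF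
  have hsum : (fun f => ∑ b ∈ G, ‖F f b‖ ^ 2) =
      ∑ b ∈ G, fun f => (F f b).re * (F f b).re + (F f b).im * (F f b).im := by
    ext f
    simp [Complex.sq_norm, Complex.normSq_apply]
  rw [hsum, two_mul]
  exact Submodule.sum_mem _ fun b _ => Submodule.add_mem _
    (bilin_mem_queryDegreeLE (LinearMap.mul ℝ ℝ) (hre b) (hre b))
    (bilin_mem_queryDegreeLE (LinearMap.mul ℝ ℝ) (him b) (him b))

end QueryDegree

section Algorithm

variable {X Y Z : Type*} [DecidableEq X] [DecidableEq Y] [DecidableEq Z] [AddCommGroup Y]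

/-- The columns of `U_f` with `b.1 = x`, when `f x = y`. -/
def oracleBlock (x : X) (y : Y) : Matrix (X × Y × Z) (X × Y × Z) ℂ :=
  Matrix.of fun b' b => if b.1 = x ∧ b' = (x, b.2.1 + y, b.2.2) then 1 else 0

lemma oracleMatrix_eq_sum_oracleBlock [Fintype X] (f : X → Y) :
    oracleMatrix (Z := Z) f = ∑ x, oracleBlock x (f x) := by
  ext b' b
  simp only [oracleMatrix, oracleBlock, Matrix.sum_apply, Matrix.of_apply, ite_and]
  simp [Finset.sum_ite_eq]

lemma oracleMatrix_mem_queryDegreeLE [Fintype X] [Fintype Y] :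
    (fun f : X → Y => oracleMatrix (Z := Z) f) ∈
      queryDegreeLE X Y (Matrix (X × Y × Z) (X × Y × Z) ℂ) 1 := by
  have hsum : (fun f : X → Y => oracleMatrix (Z := Z) f) =
      ∑ x, fun f => oracleBlock x (f x) := by
    ext f
    simp [oracleMatrix_eq_sum_oracleBlock]
  rw [hsum]
  exact Submodule.sum_mem _ fun x _ => apply_mem_queryDegreeLE_one x (oracleBlock x)

lemma runAlg_mem_queryDegreeLE [Fintype X] [Fintype Y] [Fintype Z]
    (U : ℕ → Matrix (X × Y × Z) (X × Y × Z) ℂ) (v : X × Y × Z → ℂ) (t : ℕ) :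
    (fun f => runAlg U (oracleMatrix f) t v) ∈ queryDegreeLE X Y (X × Y × Z → ℂ) t := by
  induction t with
  | zero => exact const_mem_queryDegreeLE _
  | succ t ih =>
    have h := comp_mem_queryDegreeLE ((U (t + 1)).mulVecLin.restrictScalars ℝ)
      (bilin_mem_queryDegreeLE (Matrix.mulVecBilin ℝ ℝ) oracleMatrix_mem_queryDegreeLE ih)
    rwa [add_comm] at h

end Algorithm

theorem acceptance_probability_poly_general {X Y Z : Type*}
    [Fintype X] [Fintype Y] [Fintype Z]
    [DecidableEq X] [DecidableEq Y] [DecidableEq Z] [AddCommGroup Y]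
    (T : ℕ) (x₀ : X) (z₀ : Z) (G : Finset (X × Y × Z))
    (U : ℕ → Matrix (X × Y × Z) (X × Y × Z) ℂ) :
    ∃ (S : Finset (X → Option Y)) (c : (X → Option Y) → ℝ),
      (∀ s ∈ S, domCard s ≤ 2 * T) ∧
      ∀ f : X → Y,
        (∑ b ∈ G, ‖runAlg U (oracleMatrix f) T (basisVec (x₀, (0 : Y), z₀)) b‖ ^ 2) =
          ∑ s ∈ S, c s * extendsIndicator s f := by
  obtain ⟨c, hc⟩ := exists_sum_of_mem_queryDegreeLE
    (sum_sq_norm_mem_queryDegreeLE (runAlg_mem_queryDegreeLE U (basisVec (x₀, 0, z₀)) T) G)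
  refine ⟨univ.filter (domCard · ≤ 2 * T), c, fun s hs => (mem_filter.mp hs).2, fun f => ?_⟩
  simpa only [smul_eq_mul, mul_comm] using hc f

/-- **Polynomial-method representation of the acceptance probability (synchronized
query model).**  For any `T`-query quantum algorithm, given by unitaries
`U_0, …, U_T` on `ℂ^{X × Y × Z}`, an initial basis vector `e_(x₀, 0, z₀)` and a set `G`
of accepting basis elements, there exist a finite set `S` of partial functions
`s : X ⇀ Y` with `|dom s| ≤ 2T` and reals `c_s` such that for every `f : X → Y` the
acceptance probability
`P(f) = Σ_{b ∈ G} |⟨e_b, U_T U_f ⋯ U_1 U_f U_0 e_(x₀,0,z₀)⟩|²`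
satisfies `P(f) = Σ_{s ∈ S} c_s · I_s(f)`. -/
theorem acceptance_probability_poly {X Y Z : Type*}
    [Fintype X] [Fintype Y] [Fintype Z]
    [DecidableEq X] [DecidableEq Y] [DecidableEq Z] [AddCommGroup Y]
    (T : ℕ) (x₀ : X) (z₀ : Z) (G : Finset (X × Y × Z))
    (U : ℕ → Matrix (X × Y × Z) (X × Y × Z) ℂ)
    (hU : ∀ t, t ≤ T → U t ∈ Matrix.unitaryGroup (X × Y × Z) ℂ) :
    ∃ (S : Finset (X → Option Y)) (c : (X → Option Y) → ℝ),
      (∀ s ∈ S, domCard s ≤ 2 * T) ∧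
      ∀ f : X → Y,
        (∑ b ∈ G, ‖runAlg U (oracleMatrix f) T (basisVec (x₀, (0 : Y), z₀)) b‖ ^ 2) =
          ∑ s ∈ S, c s * extendsIndicator s f :=
  acceptance_probability_poly_general T x₀ z₀ G U

end
end

section
/- Fix finite types X and Z, a finite additive abelian group Y, positive integers N and T, and unitary operators V₀, V₁, …, V_T on the Hilbert space H_std := ℂ^{(Fin N × X) × Y × Z}. For a tuple of functions O = (O₀, …, O_{N−1}) with each O_i : X → Y, let V_O be the unitary on H_std permuting basis vectors by e_{((i,x), y, z)} ↦ e_{((i,x), y + O_i(x), z)}, and let ψ_O := V_T V_O V_{T−1} ⋯ V_1 V_O V₀ e₀ for a fixed initial basis vector e₀ of H_std. Let H_syn := ℂ^{X × Y^N × ((Fin N) × Y × Z)}, for the same tuple O let U_O be the unitary on H_syn permuting basis vectors by e_{(x, (y₀,…,y_{N−1}), w)} ↦ e_{(x, (y₀ + O₀(x), …, y_{N−1} + O_{N−1}(x)), w)}, and let ι : H_std → H_syn be the linear isometry sending the basis vector e_{((i,x), y, z)} to the basis vector e_{(x, (0,…,0), (i, y, z))}. Then there exist unitary operators W₀, W₁,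 …, W_{2T} on H_syn, independent of O, such that for every tuple O of functions O_i : X → Y, W_{2T} U_O W_{2T−1} U_O ⋯ W_1 U_O W₀ e₀' = ι(ψ_O), where e₀' := ι(e₀). Consequently, any quantum query algorithm making T queries in the standard query model to N oracles can be simulated exactly, with identical output distribution, by a quantum query algorithm making 2T queries in the synchronized query model. -/
open scoped BigOperators

noncomputable section

/-- The standard-model oracle unitary `V_O` on `ℂ^{(Fin N × X) × Y × Z}`, permuting
basis vectors by `e_((i,x), y, z) ↦ e_((i,x), y + O_i(x), z)`. -/
def stdOracleMatrix {X Y Z : Type*} [DecidableEq X] [DecidableEq Y] [DecidableEq Z]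
    {N : ℕ} (O : Fin N → X → Y) [AddCommGroup Y] :
    Matrix ((Fin N × X) × Y × Z) ((Fin N × X) × Y × Z) ℂ :=
  Matrix.of fun b' b => if b' = (b.1, b.2.1 + O b.1.1 b.1.2, b.2.2) then 1 else 0

/-- The synchronized-model oracle unitary `U_O` on `ℂ^{X × Y^N × W}`, permuting basis
vectors by `e_(x, (y₀,…,y_{N−1}), w) ↦ e_(x, (y₀ + O₀(x), …, y_{N−1} + O_{N−1}(x)), w)`. -/
def synOracleMatrix {X Y W : Type*} [DecidableEq X] [DecidableEq Y] [DecidableEq W]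
    {N : ℕ} (O : Fin N → X → Y) [AddCommGroup Y] :
    Matrix (X × (Fin N → Y) × W) (X × (Fin N → Y) × W) ℂ :=
  Matrix.of fun b' b =>
    if b' = (b.1, (fun i => b.2.1 i + O i b.1), b.2.2) then 1 else 0

/-- The linear isometry `ι : ℂ^{(Fin N × X) × Y × Z} → ℂ^{X × Y^N × (Fin N × Y × Z)}`
sending the basis vector `e_((i,x), y, z)` to the basis vector `e_(x, 0, (i, y, z))`. -/
def iota {X Y Z : Type*} [DecidableEq Y] [AddCommGroup Y] {N : ℕ} (v : (Fin N × X) × Y × Z → ℂ) :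
    X × (Fin N → Y) × (Fin N × Y × Z) → ℂ :=
  fun b => if b.2.1 = 0 then v ((b.2.2.1, b.1), b.2.2.2.1, b.2.2.2.2) else 0

/-! A standard query `(i, x)` is simulated by two synchronized queries on `x`. The first writes all
answers `(O₀(x), …, O_{N−1}(x))` into a fresh register `v = 0`; an oracle-independent permutation
then adds `vᵢ` to the standard answer register and negates `v`, and the second query restores
`v = 0`. Each standard unitary `V_t` is run controlled on `v = 0`, where the simulated states live. -/

namespace Matrix

variable {m n K α : Type*}

theorem of_ite_eq_apply_eq_permMatrix [DecidableEq m] [Zero α] [One α] (e : Equiv.Perm m) :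
    (of fun b' b => if b' = e b then (1 : α) else 0) = e⁻¹.permMatrix α := by
  ext b' b
  simp [PEquiv.toMatrix_apply, Equiv.Perm.inv_def, Equiv.symm_apply_eq, eq_comm (a := b')]

theorem permMatrix_mem_unitaryGroup [Fintype m] [DecidableEq m] [CommRing α] [StarRing α]
    (e : Equiv.Perm m) : e.permMatrix α ∈ unitaryGroup m α := by
  rw [mem_unitaryGroup_iff, star_eq_conjTranspose, conjTranspose_permMatrix, ← permMatrix_mul,
    inv_mul_cancel, permMatrix_one]

theorem submatrix_equiv_mem_unitaryGroup [Fintype m] [DecidableEq m] [Fintype n] [DecidableEq n]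
    [CommRing α] [StarRing α] {A : Matrix n n α} (hA : A ∈ unitaryGroup n α) (e : m ≃ n) :
    A.submatrix e e ∈ unitaryGroup m α := by
  rw [mem_unitaryGroup_iff] at hA ⊢
  rw [star_eq_conjTranspose, conjTranspose_submatrix, submatrix_mul_equiv, ← star_eq_conjTranspose,
    hA, submatrix_one_equiv]

theorem blockDiagonal_mem_unitaryGroup [Fintype m] [DecidableEq m] [Fintype K] [DecidableEq K]
    [CommRing α] [StarRing α] {M : K → Matrix m m α} (hM : ∀ k, M k ∈ unitaryGroup m α) :
    blockDiagonal M ∈ unitaryGroup (m × K) α := by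
  rw [mem_unitaryGroup_iff, star_eq_conjTranspose, blockDiagonal_conjTranspose,
    ← blockDiagonal_mul]
  have hMM : (fun k => M k * (M k)ᴴ) = 1 := funext fun k => mem_unitaryGroup_iff.mp (hM k)
  rw [hMM, blockDiagonal_one]

theorem blockDiagonal_mulVec [Fintype n] [Fintype K] [DecidableEq K] [NonUnitalNonAssocSemiring α]
    (M : K → Matrix m n α) (v : n × K → α) :
    blockDiagonal M *ᵥ v = fun p => (M p.2 *ᵥ fun j => v (j, p.2)) p.1 := by
  ext ⟨i, k⟩
  simp [mulVec, dotProduct, blockDiagonal_apply', Fintype.sum_prod_type, ite_mul]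

def controlledOn [DecidableEq m] [DecidableEq K] [Zero α] [One α] (k₀ : K) (A : Matrix m m α) :
    Matrix (m × K) (m × K) α :=
  blockDiagonal fun k => if k = k₀ then A else 1

theorem controlledOn_mem_unitaryGroup [Fintype m] [DecidableEq m] [Fintype K] [DecidableEq K]
    [CommRing α] [StarRing α] (k₀ : K) {A : Matrix m m α} (hA : A ∈ unitaryGroup m α) :
    controlledOn k₀ A ∈ unitaryGroup (m × K) α :=
  blockDiagonal_mem_unitaryGroup fun k => by
    split_ifs
    exacts [hA, one_mem _]

theorem controlledOn_mulVec_ite [Fintype m] [DecidableEq m] [Fintype K] [DecidableEq K]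
    [NonAssocSemiring α] (k₀ : K) (A : Matrix m m α) (χ : m → α) :
    controlledOn k₀ A *ᵥ (fun p => if p.2 = k₀ then χ p.1 else 0) =
      fun p => if p.2 = k₀ then (A *ᵥ χ) p.1 else 0 := by
  rw [controlledOn, blockDiagonal_mulVec]
  ext ⟨i, k⟩
  by_cases hk : k = k₀ <;> simp [hk]

end Matrix

open Matrix in
theorem runAlg_two_mul_comp {B C : Type*} [Fintype B] [Fintype C] {U : ℕ → Matrix B B ℂ}
    {M : Matrix B B ℂ} {W : ℕ → Matrix C C ℂ} {M' : Matrix C C ℂ} {f : (B → ℂ) → C → ℂ}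
    (h_zero : ∀ v, W 0 *ᵥ f v = f (U 0 *ᵥ v))
    (h_succ : ∀ t v, W (2 * t + 2) *ᵥ (M' *ᵥ (W (2 * t + 1) *ᵥ (M' *ᵥ f v))) =
      f (U (t + 1) *ᵥ (M *ᵥ v)))
    (T : ℕ) (v : B → ℂ) : runAlg W M' (2 * T) (f v) = f (runAlg U M T v) := by
  induction T with
  | zero => exact h_zero v
  | succ t ih =>
    rw [runAlg, ← h_succ, ← ih]
    rfl

section Simulation

open Matrix

variable {X Y Z : Type*} [AddCommGroup Y] {N : ℕ}

def stdOracleEquiv (O : Fin N → X → Y) : Equiv.Perm ((Fin N × X) × Y × Z) where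
  toFun b := (b.1, b.2.1 + O b.1.1 b.1.2, b.2.2)
  invFun b := (b.1, b.2.1 - O b.1.1 b.1.2, b.2.2)
  left_inv b := by simp
  right_inv b := by simp

def synOracleEquiv {W : Type*} (O : Fin N → X → Y) : Equiv.Perm (X × (Fin N → Y) × W) where
  toFun b := (b.1, fun i => b.2.1 i + O i b.1, b.2.2)
  invFun b := (b.1, fun i => b.2.1 i - O i b.1, b.2.2)
  left_inv b := by simp
  right_inv b := by simp

def transferAnswer : Equiv.Perm (X × (Fin N → Y) × (Fin N × Y × Z)) where
  toFun b := (b.1, -b.2.1, (b.2.2.1, b.2.2.2.1 + b.2.1 b.2.2.1, b.2.2.2.2))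
  invFun b := (b.1, -b.2.1, (b.2.2.1, b.2.2.2.1 + b.2.1 b.2.2.1, b.2.2.2.2))
  left_inv b := by simp
  right_inv b := by simp

theorem synOracleEquiv_symm_transferAnswer_synOracleEquiv_symm (O : Fin N → X → Y)
    (x : X) (v : Fin N → Y) (i : Fin N) (y : Y) (z : Z) :
    (synOracleEquiv O).symm (transferAnswer ((synOracleEquiv O).symm (x, v, (i, y, z)))) =
      (x, -v, (i, y + v i - O i x, z)) := by
  simp only [synOracleEquiv, transferAnswer, Equiv.coe_fn_mk, Equiv.coe_fn_symm_mk, Prod.mk.injEq,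
    true_and, and_true]
  exact ⟨funext fun j => by simp, by abel⟩

def synIndexEquiv : X × (Fin N → Y) × (Fin N × Y × Z) ≃ ((Fin N × X) × Y × Z) × (Fin N → Y) where
  toFun b := (((b.2.2.1, b.1), b.2.2.2.1, b.2.2.2.2), b.2.1)
  invFun c := (c.1.1.2, c.2, (c.1.1.1, c.1.2.1, c.1.2.2))

variable [DecidableEq Y]

theorem iota_eq_comp_synIndexEquiv (χ : (Fin N × X) × Y × Z → ℂ) :
    iota χ = (fun p => if p.2 = 0 then χ p.1 else 0) ∘ synIndexEquiv :=
  rfl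

variable [DecidableEq X] [DecidableEq Z]

theorem stdOracleMatrix_eq_permMatrix (O : Fin N → X → Y) :
    stdOracleMatrix (Z := Z) O = (stdOracleEquiv O)⁻¹.permMatrix ℂ :=
  of_ite_eq_apply_eq_permMatrix (stdOracleEquiv O)

theorem synOracleMatrix_eq_permMatrix {W : Type*} [DecidableEq W] (O : Fin N → X → Y) :
    synOracleMatrix (W := W) O = (synOracleEquiv O)⁻¹.permMatrix ℂ :=
  of_ite_eq_apply_eq_permMatrix (synOracleEquiv O)

def liftUnitary (V : Matrix ((Fin N × X) × Y × Z) ((Fin N × X) × Y × Z) ℂ) :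
    Matrix (X × (Fin N → Y) × (Fin N × Y × Z)) (X × (Fin N → Y) × (Fin N × Y × Z)) ℂ :=
  (controlledOn 0 V).submatrix synIndexEquiv synIndexEquiv

variable [Fintype X] [Fintype Y] [Fintype Z]

theorem liftUnitary_mem_unitaryGroup {V : Matrix ((Fin N × X) × Y × Z) ((Fin N × X) × Y × Z) ℂ}
    (hV : V ∈ unitaryGroup _ ℂ) :
    liftUnitary V ∈ unitaryGroup (X × (Fin N → Y) × (Fin N × Y × Z)) ℂ :=
  submatrix_equiv_mem_unitaryGroup (controlledOn_mem_unitaryGroup 0 hV) synIndexEquiv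

theorem liftUnitary_mulVec_iota (V : Matrix ((Fin N × X) × Y × Z) ((Fin N × X) × Y × Z) ℂ)
    (χ : (Fin N × X) × Y × Z → ℂ) : liftUnitary V *ᵥ iota χ = iota (V *ᵥ χ) := by
  rw [liftUnitary, iota_eq_comp_synIndexEquiv, submatrix_mulVec_equiv, Function.comp_assoc,
    Equiv.self_comp_symm, Function.comp_id, controlledOn_mulVec_ite, iota_eq_comp_synIndexEquiv]

theorem synOracleMatrix_transferAnswer_synOracleMatrix_iota (O : Fin N → X → Y)
    (ψ : (Fin N × X) × Y × Z → ℂ) :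
    synOracleMatrix O *ᵥ (transferAnswer.permMatrix ℂ *ᵥ (synOracleMatrix O *ᵥ iota ψ)) =
      iota (stdOracleMatrix O *ᵥ ψ) := by
  ext ⟨x, v, i, y, z⟩
  simp only [synOracleMatrix_eq_permMatrix, stdOracleMatrix_eq_permMatrix, permMatrix_mulVec,
    Function.comp_apply, Equiv.Perm.inv_def, synOracleEquiv_symm_transferAnswer_synOracleEquiv_symm]
  by_cases hv : v = 0
  · simp [hv, iota, stdOracleEquiv, sub_eq_add_neg]
  · simp [hv, iota]

end Simulation

theorem standard_to_synchronized_simulation_general {X Z : Type*} {Y : Type*}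
    [Fintype X] [Fintype Y] [Fintype Z]
    [DecidableEq X] [DecidableEq Y] [DecidableEq Z] [AddCommGroup Y]
    (N T : ℕ)
    (V : ℕ → Matrix ((Fin N × X) × Y × Z) ((Fin N × X) × Y × Z) ℂ)
    (hV : ∀ t, t ≤ T → V t ∈ Matrix.unitaryGroup ((Fin N × X) × Y × Z) ℂ)
    (b₀ : (Fin N × X) × Y × Z) :
    ∃ W : ℕ → Matrix (X × (Fin N → Y) × (Fin N × Y × Z))
        (X × (Fin N → Y) × (Fin N × Y × Z)) ℂ,
      (∀ t, t ≤ 2 * T → W t ∈ Matrix.unitaryGroup (X × (Fin N → Y) × (Fin N × Y × Z)) ℂ) ∧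
      ∀ O : Fin N → X → Y,
        runAlg W (synOracleMatrix O) (2 * T) (iota (basisVec b₀)) =
          iota (runAlg V (stdOracleMatrix O) T (basisVec b₀)) := by
  refine ⟨fun k => if k % 2 = 0 then liftUnitary (V (k / 2)) else transferAnswer.permMatrix ℂ,
    fun t ht => ?_, fun O => runAlg_two_mul_comp (fun v => ?_) (fun t v => ?_) T _⟩
  · beta_reduce
    split_ifs
    exacts [liftUnitary_mem_unitaryGroup (hV _ (by omega)), Matrix.permMatrix_mem_unitaryGroup _]
  · exact liftUnitary_mulVec_iota (V 0) v
  · have h_even : (2 * t + 2) % 2 = 0 ∧ (2 * t + 2) / 2 = t + 1 := by omega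
    have h_odd : (2 * t + 1) % 2 ≠ 0 := by omega
    simp only [h_even, h_odd, if_true, if_false, synOracleMatrix_transferAnswer_synOracleMatrix_iota,
      liftUnitary_mulVec_iota]

/-- **Simulation of the standard query model by the synchronized query model.**
Given a `T`-query algorithm in the standard query model to `N` oracles, with unitaries
`V_0, …, V_T` on `ℂ^{(Fin N × X) × Y × Z}` and initial basis vector `e₀`, there exist
unitaries `W_0, …, W_{2T}` on `ℂ^{X × Y^N × (Fin N × Y × Z)}`, independent of the
oracles, such that for every tuple `O = (O₀, …, O_{N−1})` of oracles `O_i : X → Y`,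
`W_{2T} U_O W_{2T−1} ⋯ W_1 U_O W_0 ι(e₀) = ι(V_T V_O ⋯ V_1 V_O V_0 e₀)`.
Consequently any `T`-query standard-model algorithm is simulated exactly, with
identical output distribution, by a `2T`-query synchronized-model algorithm. -/
theorem standard_to_synchronized_simulation {X Z : Type*} {Y : Type*}
    [Fintype X] [Fintype Y] [Fintype Z]
    [DecidableEq X] [DecidableEq Y] [DecidableEq Z] [AddCommGroup Y]
    (N T : ℕ) (hN : 0 < N) (hT : 0 < T)
    (V : ℕ → Matrix ((Fin N × X) × Y × Z) ((Fin N × X) × Y × Z) ℂ)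
    (hV : ∀ t, t ≤ T → V t ∈ Matrix.unitaryGroup ((Fin N × X) × Y × Z) ℂ)
    (b₀ : (Fin N × X) × Y × Z) :
    ∃ W : ℕ → Matrix (X × (Fin N → Y) × (Fin N × Y × Z))
        (X × (Fin N → Y) × (Fin N × Y × Z)) ℂ,
      (∀ t, t ≤ 2 * T → W t ∈ Matrix.unitaryGroup (X × (Fin N → Y) × (Fin N × Y × Z)) ℂ) ∧
      ∀ O : Fin N → X → Y,
        runAlg W (synOracleMatrix O) (2 * T) (iota (basisVec b₀)) =
          iota (runAlg V (stdOracleMatrix O) T (basisVec b₀)) :=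
  standard_to_synchronized_simulation_general N T V hV b₀
end
end
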